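/- Let T ∈ ℕ. Given a lasso ρ_A·ρ_C^ω in a weighted graph G, let φ_{AC} be the constraint on M associated with the finite path ρ_A·ρ_C, and let M_C be the average weight of the cycle ρ_C. Then val(ρ_A·ρ_C^ω, T) ≥ 0 if and only if there exists M ∈ ℝ with M ≤ M_C satisfying φ_{AC}(M). -/

import Mathlib

open scoped BigOperators

/-- A stopping-time distribution: pointwise nonnegative, total mass `1`,
with absolutely convergent expected time. -/
def IsStopDist (δ : ℕ → ℝ) : Prop :=
  (∀ t, 0 ≤ δ t) ∧ Summable δ ∧ (∑' t, δ t) = 1 ∧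
    Summable (fun t : ℕ => (t : ℝ) * δ t)

/-- The expected (stopping) time of `δ`. -/
noncomputable def expTime (δ : ℕ → ℝ) : ℝ := ∑' t : ℕ, (t : ℝ) * δ t

/-- The expected utility of the utility sequence `u` under `δ`. -/
noncomputable def expUtil (u δ : ℕ → ℝ) : ℝ := ∑' t : ℕ, u t * δ t

/-- The value of a utility sequence `u` under adversarial stopping-time
distributions with expected time `T`:
`val u T = inf { 𝔼_δ(u) | δ a stopping-time distribution with 𝔼_δ = T }`. -/
noncomputable def val (u : ℕ → ℝ) (T : ℕ) : ℝ :=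
  sInf {x | ∃ δ : ℕ → ℝ, IsStopDist δ ∧ (Summable fun t => u t * δ t) ∧
    expTime δ = (T : ℝ) ∧ x = expUtil u δ}

/-- The sum of the weights of the first `n` edges of the infinite path with
vertex sequence `p` in the weighted graph with weight function `w`. -/
noncomputable def sumW {V : Type*} (w : V → V → ℤ) (p : ℕ → V) (n : ℕ) : ℝ :=
  ∑ k ∈ Finset.range n, (w (p k) (p (k + 1)) : ℝ)

/-- The utility sequence induced by the path with vertex sequence `p`:
`u i = ∑_{k ≤ i} w(e_k)`. -/
noncomputable def pathUtil {V : Type*} (w : V → V → ℤ) (p : ℕ → V) : ℕ → ℝ :=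
  fun i => sumW w p (i + 1)

/-- The value of the infinite path with vertex sequence `p` under adversarial
stopping-time distributions with expected time `T`. -/
noncomputable def pathVal {V : Type*} (w : V → V → ℤ) (p : ℕ → V) (T : ℕ) : ℝ :=
  val (pathUtil w p) T

/-- `p` is (the vertex sequence of) an infinite path from `v₀` in the graph
with edge relation `E`. -/
def IsPath {V : Type*} (E : V → V → Prop) (v₀ : V) (p : ℕ → V) : Prop :=
  p 0 = v₀ ∧ ∀ i, E (p i) (p (i + 1))

/-- `ν = min_{0 ≤ t₁ ≤ T} inf_{t₂ ≥ T} (u t₂ - u t₁)/(t₂ - t₁)` for the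
utility sequence `u` induced by the path `p`. -/
noncomputable def nuPath {V : Type*} (w : V → V → ℤ) (p : ℕ → V) (T : ℕ) : ℝ :=
  sInf {x | ∃ t₁ t₂ : ℕ, t₁ ≤ T ∧ T ≤ t₂ ∧ t₁ < t₂ ∧
    x = (pathUtil w p t₂ - pathUtil w p t₁) / ((t₂ : ℝ) - (t₁ : ℝ))}

/-- The constraint `φ_ρ(M)` on the slope parameter `M` associated with the
finite path with vertex sequence `q` and `L` edges:
`⋀_{0 ≤ i < L} (u_i ≥ M·(i − T))` where `u_i = ∑_{k ≤ i} w(e_k)`. -/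
def PhiConstraint {V : Type*} (w : V → V → ℤ) (T : ℕ) (q : ℕ → V) (L : ℕ)
    (M : ℝ) : Prop :=
  ∀ i < L, M * ((i : ℝ) - (T : ℝ)) ≤ sumW w q (i + 1)

/-!
The value of a utility sequence `u` is nonnegative exactly when some line through `(T, 0)`
lies below `u`. One direction is linearity of expectation: a line `M (t - T)` has expectation
`0` under every stopping-time distribution with mean `T`. Conversely, testing against the point
mass at `T` and against the two-point distributions on `s < T < t` with mean `T` shows that
every slope from `(s, u s)` to `(T, 0)` is below every slope from `(T, 0)` to `(t, u t)`;
bounded edge weights keep the latter slopes bounded below, so a line fits in between.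
For a lasso, `u (t + c) = u t + S_C` from `a` on, so such a line must have slope at most
`M_C`, and a line of slope at most `M_C` below `u` on the first `a + c` positions stays below
it forever.
-/

def IsLowerLine (u : ℕ → ℝ) (T : ℕ) (M : ℝ) : Prop :=
  ∀ t : ℕ, M * ((t : ℝ) - T) ≤ u t

section StoppingTimes

variable {u δ : ℕ → ℝ} {T : ℕ}

theorem affine_le_expUtil {α β : ℝ} (hδ : IsStopDist δ) (hu : Summable fun t => u t * δ t)
    (h : ∀ t : ℕ, α + β * t ≤ u t) : α + β * expTime δ ≤ expUtil u δ := by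
  obtain ⟨hδ_nonneg, hδ_summable, hδ_total, hδ_time⟩ := hδ
  have hmass : HasSum δ 1 := hδ_total ▸ hδ_summable.hasSum
  have haffine : HasSum (fun t : ℕ => (α + β * t) * δ t) (α + β * expTime δ) := by
    simpa [expTime, add_mul, mul_assoc] using
      (hmass.mul_left α).add (hδ_time.hasSum.mul_left β)
  exact hasSum_le (fun t => mul_le_mul_of_nonneg_right (h t) (hδ_nonneg t)) haffine hu.hasSum

theorem val_nonneg_of_isLowerLine {M : ℝ} (h : IsLowerLine u T M) : 0 ≤ val u T := by
  refine Real.sInf_nonneg ?_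
  rintro _ ⟨δ, hδ, hu, hT, rfl⟩
  have := affine_le_expUtil (α := -(M * T)) (β := M) hδ hu fun t => by
    linarith [h t]
  rw [hT] at this
  linarith

theorem expUtil_nonneg_of_val_nonneg {α β : ℝ} (hlow : ∀ t : ℕ, α + β * t ≤ u t)
    (h0 : 0 ≤ val u T) (hδ : IsStopDist δ) (hu : Summable fun t => u t * δ t)
    (hT : expTime δ = T) : 0 ≤ expUtil u δ := by
  refine h0.trans (csInf_le ⟨α + β * T, ?_⟩ ⟨δ, hδ, hu, hT, rfl⟩)
  rintro _ ⟨δ', hδ', hu', hT', rfl⟩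
  simpa [hT'] using affine_le_expUtil hδ' hu' hlow

noncomputable def twoPoint (t₁ t₂ : ℕ) (w₁ w₂ : ℝ) : ℕ → ℝ :=
  Pi.single t₁ w₁ + Pi.single t₂ w₂

theorem hasSum_mul_twoPoint (g : ℕ → ℝ) (t₁ t₂ : ℕ) (w₁ w₂ : ℝ) :
    HasSum (fun t => g t * twoPoint t₁ t₂ w₁ w₂ t) (g t₁ * w₁ + g t₂ * w₂) := by
  simp only [twoPoint, Pi.add_apply, mul_add]
  refine HasSum.add ?_ ?_
  · simpa using hasSum_single (f := fun t => g t * (Pi.single t₁ w₁ : ℕ → ℝ) t) t₁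
      fun t ht => by simp [ht]
  · simpa using hasSum_single (f := fun t => g t * (Pi.single t₂ w₂ : ℕ → ℝ) t) t₂
      fun t ht => by simp [ht]

theorem isStopDist_twoPoint {t₁ t₂ : ℕ} {w₁ w₂ : ℝ} (hw₁ : 0 ≤ w₁) (hw₂ : 0 ≤ w₂)
    (hsum : w₁ + w₂ = 1) : IsStopDist (twoPoint t₁ t₂ w₁ w₂) := by
  refine ⟨fun t => ?_, ?_, ?_, (hasSum_mul_twoPoint _ t₁ t₂ w₁ w₂).summable⟩
  · simp only [twoPoint, Pi.add_apply, Pi.single_apply]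
    split_ifs <;> linarith
  · simpa using (hasSum_mul_twoPoint 1 t₁ t₂ w₁ w₂).summable
  · simpa [hsum] using (hasSum_mul_twoPoint 1 t₁ t₂ w₁ w₂).tsum_eq

theorem convex_comb_nonneg_of_val_nonneg {α β : ℝ} (hlow : ∀ t : ℕ, α + β * t ≤ u t)
    (h0 : 0 ≤ val u T) {t₁ t₂ : ℕ} {w₁ w₂ : ℝ} (hw₁ : 0 ≤ w₁) (hw₂ : 0 ≤ w₂) (hsum : w₁ + w₂ = 1)
    (hmean : (t₁ : ℝ) * w₁ + t₂ * w₂ = T) : 0 ≤ u t₁ * w₁ + u t₂ * w₂ := by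
  have h := expUtil_nonneg_of_val_nonneg hlow h0 (isStopDist_twoPoint hw₁ hw₂ hsum)
    (hasSum_mul_twoPoint u t₁ t₂ w₁ w₂).summable
    ((hasSum_mul_twoPoint _ t₁ t₂ w₁ w₂).tsum_eq.trans hmean)
  rwa [expUtil, (hasSum_mul_twoPoint u t₁ t₂ w₁ w₂).tsum_eq] at h

end StoppingTimes

theorem ge_sub_mul_of_increment_ge {u : ℕ → ℝ} {B : ℝ} (hinc : ∀ t, u t - B ≤ u (t + 1))
    {s t : ℕ} (hst : s ≤ t) : u s - B * ((t : ℝ) - s) ≤ u t := by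
  induction t, hst using Nat.le_induction with
  | base => simp
  | succ t _ ih =>
    push_cast
    linarith [hinc t]

-- The largest of `K` and the slopes from the points left of `T` to `(T, 0)` works.
theorem exists_isLowerLine {u : ℕ → ℝ} {T : ℕ} (K : ℝ)
    (hright : ∀ t, T ≤ t → K * ((t : ℝ) - T) ≤ u t)
    (hpair : ∀ s t : ℕ, s < T → T < t → 0 ≤ u s * ((t : ℝ) - T) + u t * ((T : ℝ) - s)) :
    ∃ M, IsLowerLine u T M := by
  set slopes : Finset ℝ := insert K ((Finset.range T).image fun s => u s / ((s : ℝ) - T))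
  have hne : slopes.Nonempty := Finset.insert_nonempty _ _
  refine ⟨slopes.max' hne, fun t => ?_⟩
  rcases lt_trichotomy t T with htT | rfl | hTt
  · have hneg : (t : ℝ) - T < 0 := by simp [htT]
    have hle : u t / ((t : ℝ) - T) ≤ slopes.max' hne := Finset.le_max' slopes _
      (Finset.mem_insert_of_mem (Finset.mem_image_of_mem _ (Finset.mem_range.mpr htT)))
    exact (div_le_iff_of_neg hneg).mp hle
  · simpa using hright t le_rfl
  · suffices ∀ x ∈ slopes, x * ((t : ℝ) - T) ≤ u t from this _ (Finset.max'_mem _ _)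
    intro x hx
    rcases Finset.mem_insert.mp hx with rfl | hx
    · exact hright t hTt.le
    obtain ⟨s, hs, rfl⟩ := Finset.mem_image.mp hx
    have hsT : s < T := Finset.mem_range.mp hs
    have hneg : (s : ℝ) - T < 0 := by simp [hsT]
    rw [div_mul_eq_mul_div, div_le_iff_of_neg hneg]
    linarith [hpair s t hsT hTt]

theorem val_nonneg_iff_exists_isLowerLine {u : ℕ → ℝ} {T : ℕ} {B : ℝ}
    (hinc : ∀ t, u t - B ≤ u (t + 1)) : 0 ≤ val u T ↔ ∃ M, IsLowerLine u T M := by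
  refine ⟨fun h0 => ?_, fun ⟨M, hM⟩ => val_nonneg_of_isLowerLine hM⟩
  have hlow : ∀ t : ℕ, u 0 + -B * t ≤ u t := fun t => by
    simpa [sub_eq_add_neg] using ge_sub_mul_of_increment_ge hinc (Nat.zero_le t)
  have hT : 0 ≤ u T := by
    simpa using convex_comb_nonneg_of_val_nonneg (t₁ := T) (t₂ := T) (w₁ := 1) (w₂ := 0)
      hlow h0 zero_le_one le_rfl (add_zero 1) (by ring)
  refine exists_isLowerLine (-B) (fun t hTt => ?_) (fun s t hsT hTt => ?_)
  · linarith [ge_sub_mul_of_increment_ge hinc hTt]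
  · have hsT' : (s : ℝ) < T := by exact_mod_cast hsT
    have hTt' : (T : ℝ) < t := by exact_mod_cast hTt
    have hgap : (0 : ℝ) < t - s := by linarith
    have h := convex_comb_nonneg_of_val_nonneg hlow h0 (t₁ := s) (t₂ := t)
      (div_nonneg (sub_nonneg.mpr hTt'.le) hgap.le) (div_nonneg (sub_nonneg.mpr hsT'.le) hgap.le)
      (by field_simp; ring) (by field_simp; ring)
    calc (0 : ℝ) ≤ (u s * ((t - T) / (t - s)) + u t * ((T - s) / (t - s))) * (t - s) :=
          mul_nonneg h hgap.le
      _ = u s * ((t : ℝ) - T) + u t * ((T : ℝ) - s) := by field_simp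

section Periodic

variable {u : ℕ → ℝ} {T a c : ℕ} {S M : ℝ}

theorem add_mul_period (hper : ∀ t, a ≤ t → u (t + c) = u t + S) {t : ℕ} (ht : a ≤ t)
    (n : ℕ) : u (t + n * c) = u t + n * S := by
  induction n with
  | zero => simp
  | succ n ih =>
    rw [add_mul, one_mul, ← add_assoc, hper _ (by omega), ih]
    push_cast
    ring

theorem mul_le_of_isLowerLine (hper : ∀ t, a ≤ t → u (t + c) = u t + S)
    (h : IsLowerLine u T M) : M * c ≤ S := by
  by_contra! hlt
  obtain ⟨n, hn⟩ := exists_nat_gt ((u a - M * ((a : ℝ) - T)) / (M * c - S))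
  rw [div_lt_iff₀ (sub_pos.mpr hlt)] at hn
  have := h (a + n * c)
  rw [add_mul_period hper le_rfl n] at this
  push_cast at this
  linarith

theorem isLowerLine_of_periodic (hc : 0 < c) (hper : ∀ t, a ≤ t → u (t + c) = u t + S)
    (hM : M * c ≤ S) (hinit : ∀ t < a + c, M * ((t : ℝ) - T) ≤ u t) : IsLowerLine u T M := by
  intro t
  induction t using Nat.strong_induction_on with
  | _ t ih =>
    rcases lt_or_ge t (a + c) with ht | ht
    · exact hinit t ht
    obtain ⟨s, rfl⟩ : ∃ s, t = s + c := ⟨t - c, by omega⟩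
    rw [hper s (by omega)]
    push_cast
    linarith [ih s (by omega)]

theorem exists_isLowerLine_iff_of_periodic (hc : 0 < c)
    (hper : ∀ t, a ≤ t → u (t + c) = u t + S) :
    (∃ M, IsLowerLine u T M) ↔ ∃ M, M * c ≤ S ∧ ∀ t < a + c, M * ((t : ℝ) - T) ≤ u t :=
  ⟨fun ⟨M, hM⟩ => ⟨M, mul_le_of_isLowerLine hper hM, fun t _ => hM t⟩,
    fun ⟨M, hMS, hinit⟩ => ⟨M, isLowerLine_of_periodic hc hper hMS hinit⟩⟩

end Periodic

section Lasso

variable {V : Type*} {w : V → V → ℤ} {p : ℕ → V}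

theorem sumW_succ (n : ℕ) : sumW w p (n + 1) = sumW w p n + w (p n) (p (n + 1)) :=
  Finset.sum_range_succ _ _

theorem sumW_add_period {a c : ℕ} (hper : ∀ i, a ≤ i → p (i + c) = p i) {n : ℕ} (hn : a ≤ n) :
    sumW w p (n + c) = sumW w p n + (sumW w p (a + c) - sumW w p a) := by
  induction n, hn using Nat.le_induction with
  | base => ring
  | succ n hn ih =>
    rw [show n + 1 + c = n + c + 1 by omega, sumW_succ, ih, sumW_succ, hper n hn,
      show n + c + 1 = n + 1 + c by omega, hper (n + 1) (by omega)]
    ring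

theorem pathUtil_add_period {a c : ℕ} (hper : ∀ i, a ≤ i → p (i + c) = p i) {t : ℕ}
    (ht : a ≤ t) :
    pathUtil w p (t + c) = pathUtil w p t + (sumW w p (a + c) - sumW w p a) := by
  simp only [pathUtil, show t + c + 1 = t + 1 + c by omega]
  exact sumW_add_period hper (by omega)

theorem exists_pathUtil_increment_ge [Finite V] (w : V → V → ℤ) (p : ℕ → V) :
    ∃ B : ℝ, ∀ t, pathUtil w p t - B ≤ pathUtil w p (t + 1) := by
  obtain ⟨b, hb⟩ := (Set.finite_range (Function.uncurry w)).bddBelow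
  refine ⟨-b, fun t => ?_⟩
  have hbt : (b : ℝ) ≤ w (p (t + 1)) (p (t + 2)) := by
    exact_mod_cast hb ⟨(p (t + 1), p (t + 2)), rfl⟩
  simp only [pathUtil, sumW_succ (n := t + 1)]
  linarith

end Lasso

theorem lasso_value_nonneg_iff_general
    {V : Type*} [Fintype V]
    (w : V → V → ℤ) (T : ℕ)
    (p : ℕ → V)
    (a c : ℕ) (hc : 1 ≤ c) (hper : ∀ i, a ≤ i → p (i + c) = p i) :
    0 ≤ pathVal w p T ↔
      ∃ M : ℝ, M ≤ (sumW w p (a + c) - sumW w p a) / (c : ℝ) ∧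
        PhiConstraint w T p (a + c) M := by
  obtain ⟨B, hB⟩ := exists_pathUtil_increment_ge w p
  have hc_pos : (0 : ℝ) < c := by exact_mod_cast hc
  rw [pathVal, val_nonneg_iff_exists_isLowerLine hB,
    exists_isLowerLine_iff_of_periodic hc fun t ht => pathUtil_add_period hper ht]
  simp only [le_div_iff₀ hc_pos]
  rfl

/-- A lasso `ρ_A·ρ_C^ω` (given as an infinite path `p` that is periodic with
period `c ≥ 1` from position `a` on) has value at least `0` if and only if
there exists a slope `M ≤ M_C` (where `M_C` is the average weight of the cycle
`ρ_C`) satisfying the constraint `φ_{AC}` associated with the finite path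
`ρ_A·ρ_C`. -/
theorem lasso_value_nonneg_iff
    {V : Type*} [Fintype V]
    (E : V → V → Prop) (w : V → V → ℤ) (T : ℕ)
    (v₀ : V) (p : ℕ → V) (hp : IsPath E v₀ p)
    (a c : ℕ) (hc : 1 ≤ c) (hper : ∀ i, a ≤ i → p (i + c) = p i) :
    0 ≤ pathVal w p T ↔
      ∃ M : ℝ, M ≤ (sumW w p (a + c) - sumW w p a) / (c : ℝ) ∧
        PhiConstraint w T p (a + c) M :=
  lasso_value_nonneg_iff_general w T p a c hc hper
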